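/- arXiv:math/0505571 — 6 statements merged into one kernel-verified Lean document; each statement's English description precedes it below -/
import Mathlib

section
/- Let G be an irreducible finite subgroup of GL(V) with dim_C V = n. If Λ is a nonzero G-invariant lattice in V, then the rank of Λ is n or 2n. -/
open Module Submodule

lemma aux_rank {V : Type*} [NormedAddCommGroup V] [NormedSpace ℝ V] [FiniteDimensional ℝ V]
    (Λ : AddSubgroup V) [DiscreteTopology Λ] :
    Module.finrank ℤ Λ = Module.finrank ℝ (span ℝ (Λ : Set V)) := by
  set L : Submodule ℤ V := AddSubgroup.toIntSubmodule Λ with hL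
  set W : Submodule ℝ V := span ℝ (Λ : Set V) with hW
  have hLW : (L : Set V) ⊆ W := subset_span
  have hdisc : DiscreteTopology L := ‹DiscreteTopology Λ›
  set L' : Submodule ℤ W := ZLattice.comap ℝ L W.subtype with hL'
  have hdisc' : DiscreteTopology L' :=
    ZLattice.comap_discreteTopology ℝ L continuous_subtype_val Subtype.val_injective
  have hspan : IsZLattice ℝ L' := by
    constructor
    rw [hL', ZLattice.coe_comap, span_preimage_eq (Submodule.nonempty L)
      (by simpa [Submodule.range_subtype] using hLW)]
    have : span ℝ (L : Set V) = W := rfl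
    rw [this]
    exact comap_subtype_self W ▸ rfl
  have hrank : finrank ℤ L' = finrank ℝ W := ZLattice.rank ℝ L'
  have h1 : finrank ℤ L = finrank ℤ L' := by
    refine (LinearEquiv.finrank_eq ?_)
    exact { toFun := fun x => ⟨⟨x.1, hLW x.2⟩, x.2⟩
            invFun := fun y => ⟨y.1.1, y.2⟩
            left_inv := fun x => rfl
            right_inv := fun y => rfl
            map_add' := fun x y => rfl
            map_smul' := fun c x => rfl }
  have h0 : finrank ℤ Λ = finrank ℤ L := by
    refine (LinearEquiv.finrank_eq ?_)
    exact { toFun := fun x => ⟨x.1, x.2⟩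
            invFun := fun y => ⟨y.1, y.2⟩
            left_inv := fun x => rfl
            right_inv := fun y => rfl
            map_add' := fun x y => rfl
            map_smul' := fun c x => rfl }
  omega


/-- If `G` is an irreducible finite subgroup of `GL(V)` with `dim_ℂ V = n` and `Λ` is a
nonzero `G`-invariant lattice (discrete additive subgroup) in `V`, then the rank of `Λ`
is `n` or `2n`. -/
theorem stmt4 {V : Type*} [NormedAddCommGroup V] [NormedSpace ℂ V] [FiniteDimensional ℂ V]
    {n : ℕ} (hn : Module.finrank ℂ V = n) (hn1 : 1 ≤ n)
    (G : Subgroup (Module.End ℂ V)ˣ) [Finite G]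
    (hirr : ∀ W : Submodule ℂ V,
      (∀ g ∈ G, ∀ v ∈ W, (g : Module.End ℂ V) v ∈ W) → W = ⊥ ∨ W = ⊤)
    (Λ : AddSubgroup V) (hΛne : Λ ≠ ⊥) [DiscreteTopology Λ]
    (hinv : ∀ g ∈ G, ∀ x ∈ Λ, (g : Module.End ℂ V) x ∈ Λ) :
    Module.finrank ℤ Λ = n ∨ Module.finrank ℤ Λ = 2 * n := by
  classical
  set W : Submodule ℝ V := span ℝ (Λ : Set V) with hWdef
  have hrank : finrank ℤ Λ = finrank ℝ W := aux_rank Λ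
  have hVdim : finrank ℝ V = 2 * n := by
    rw [← hn, ← Complex.finrank_real_complex]
    exact (finrank_mul_finrank ℝ ℂ V).symm
  -- complex span of Λ is ⊤
  have hspanC : span ℂ (Λ : Set V) = ⊤ := by
    have hginv : ∀ g ∈ G, ∀ v ∈ span ℂ (Λ : Set V), (g : Module.End ℂ V) v ∈ span ℂ (Λ : Set V) := by
      intro g hg v hv
      have h1 : (g : Module.End ℂ V) v ∈ (span ℂ (Λ : Set V)).map (g : Module.End ℂ V) :=
        mem_map_of_mem hv
      rw [Submodule.map_span] at h1
      refine span_mono ?_ h1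
      rintro _ ⟨x, hx, rfl⟩
      exact hinv g hg x hx
    rcases hirr (span ℂ (Λ : Set V)) hginv with h | h
    · exfalso
      apply hΛne
      ext x
      simp only [AddSubgroup.mem_bot]
      constructor
      · intro hx
        have : x ∈ span ℂ (Λ : Set V) := subset_span hx
        rw [h] at this
        simpa using this
      · rintro rfl; exact Λ.zero_mem
    · exact h
  -- g preserves W
  have hgW : ∀ g ∈ G, ∀ v ∈ W, (g : Module.End ℂ V) v ∈ W := by
    intro g hg v hv
    have h1 : (g : Module.End ℂ V) v ∈ W.map ((g : Module.End ℂ V).restrictScalars ℝ) :=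
      mem_map_of_mem hv
    rw [hWdef, Submodule.map_span] at h1
    refine span_mono ?_ h1
    rintro _ ⟨x, hx, rfl⟩
    exact hinv g hg x hx
  -- J = multiplication by I
  set J : V ≃ₗ[ℝ] V :=
    (LinearEquiv.smulOfNeZero ℂ V Complex.I Complex.I_ne_zero).restrictScalars ℝ with hJdef
  have hJapp : ∀ v : V, J v = Complex.I • v := fun v => rfl
  set W2 : Submodule ℝ V := W ⊓ W.map (J : V →ₗ[ℝ] V) with hW2def
  have hIW2 : ∀ x ∈ W2, Complex.I • x ∈ W2 := by
    rintro x ⟨hx1, hx2⟩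
    constructor
    · obtain ⟨y, hy, rfl⟩ := hx2
      have heq : Complex.I • J y = -y := by
        rw [hJapp, smul_smul, Complex.I_mul_I, neg_one_smul]
      show Complex.I • J y ∈ W
      rw [heq]
      exact W.neg_mem hy
    · exact ⟨x, hx1, rfl⟩
  -- W2 is a complex submodule
  set Wc : Submodule ℂ V :=
    { carrier := W2
      add_mem' := fun ha hb => W2.add_mem ha hb
      zero_mem' := W2.zero_mem
      smul_mem' := by
        intro c x hx
        have h1 : c • x = c.re • x + c.im • (Complex.I • x) := by
          have hc : ((c.re : ℂ) + (c.im : ℂ) * Complex.I) = c := Complex.re_add_im c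
          calc c • x = ((c.re : ℂ) + (c.im : ℂ) * Complex.I) • x := by rw [hc]
            _ = (c.re : ℂ) • x + ((c.im : ℂ) * Complex.I) • x := add_smul _ _ _
            _ = (c.re : ℂ) • x + (c.im : ℂ) • (Complex.I • x) := by rw [mul_smul]
            _ = c.re • x + c.im • (Complex.I • x) := by
                rw [← Complex.coe_algebraMap, algebraMap_smul, algebraMap_smul]
        show c • x ∈ W2
        rw [h1]
        exact W2.add_mem (W2.smul_mem _ hx) (W2.smul_mem _ (hIW2 x hx)) } with hWcdef
  have hWc_inv : ∀ g ∈ G, ∀ v ∈ Wc, (g : Module.End ℂ V) v ∈ Wc := by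
    intro g hg v hv
    obtain ⟨hv1, hv2⟩ : v ∈ W2 := hv
    refine (⟨hgW g hg v hv1, ?_⟩ : _ ∈ W2)
    obtain ⟨y, hy, rfl⟩ := hv2
    have hcomm : (g : Module.End ℂ V) ((J : V →ₗ[ℝ] V) y) =
        (J : V →ₗ[ℝ] V) ((g : Module.End ℂ V) y) := by
      show (g : Module.End ℂ V) (Complex.I • y) = Complex.I • ((g : Module.End ℂ V) y)
      exact map_smul _ _ _
    rw [hcomm]
    exact mem_map_of_mem (hgW g hg y hy)
  rcases hirr Wc hWc_inv with h | h
  · -- W ⊓ J W = ⊥ : rank = n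
    left
    have hbot : W ⊓ W.map (J : V →ₗ[ℝ] V) = ⊥ := by
      ext x
      simp only [Submodule.mem_bot]
      constructor
      · intro hx
        have hx' : x ∈ Wc := hx
        rw [h] at hx'
        simpa using hx'
      · rintro rfl; exact zero_mem _
    have hsum := Submodule.finrank_sup_add_finrank_inf_eq W (W.map (J : V →ₗ[ℝ] V))
    rw [hbot, finrank_bot] at hsum
    have hmap : finrank ℝ (W.map (J : V →ₗ[ℝ] V)) = finrank ℝ W :=
      LinearEquiv.finrank_map_eq J W
    have hle : finrank ℝ ↥(W ⊔ W.map (J : V →ₗ[ℝ] V)) ≤ 2 * n :=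
      hVdim ▸ Submodule.finrank_le _
    have hge : n ≤ finrank ℝ W := by
      have hWtop : span ℂ (W : Set V) = ⊤ := by
        rw [hWdef, span_span_of_tower, hspanC]
      set k := finrank ℝ W with hk
      let b : Basis (Fin k) ℝ W := finBasis ℝ W
      set v : Fin k → V := fun i => (b i : V) with hvdef
      have hv : span ℝ (Set.range v) = W := by
        have himg : Set.range v = W.subtype '' (Set.range b) := by
          ext x; simp [hvdef]
        rw [himg, ← Submodule.map_span, b.span_eq, Submodule.map_top, Submodule.range_subtype]
      have htop : span ℂ (Set.range v) = ⊤ := by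
        rw [← span_span_of_tower (R := ℝ), hv, hWtop]
      have h2 : finrank ℂ (span ℂ (Set.range v)) ≤ k := by
        simpa [Set.finrank, Fintype.card_fin] using finrank_range_le_card (R := ℂ) v
      rw [htop] at h2
      have h3 : finrank ℂ (⊤ : Submodule ℂ V) = n := by rw [finrank_top, hn]
      omega
    omega
  · -- W2 = ⊤ : rank = 2n
    right
    have hWtop' : W = ⊤ := by
      rw [eq_top_iff]
      intro x _
      have hx : x ∈ Wc := by rw [h]; trivial
      exact (hx : x ∈ W2).1
    rw [hrank, hWtop', finrank_top, hVdim]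
end

section
/- Let G be an irreducible finite subgroup of GL(V) and Λ a nonzero G-invariant lattice in V. Then the field Q(χ_{G,V}) generated over Q by the traces of the elements of G is either Q or an imaginary quadratic number field. -/
/-!
Schur's lemma makes every class sum `∑ᵤ u g u⁻¹` a scalar, namely `|G| tr(g) / dim V`; since
these sums preserve the `ℚ`-span `W` of `Λ`, so does multiplication by every trace, hence by
every element of the trace field `F` (the scalars preserving `W` form a field, being a
finite-dimensional `ℚ`-algebra). Thus `W` is an `F`-vector space, say of dimension `m`, and
`[F : ℚ] m = dim_ℚ W = rank Λ ≤ 2 dim_ℂ V`. An `F`-basis of `W` spans `V` over `ℂ`, so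
`dim_ℂ V ≤ m` and `[F : ℚ] ≤ 2`; if `F` were real, the same basis would span `ℝ Λ` over `ℝ`,
forcing `rank Λ ≤ m` and `F = ℚ`.
-/

open Module Submodule

def Submodule.scalarStabilizer {K V : Type*} [Field K] [AddCommGroup V] [Module K V]
    (L : Type*) [CommRing L] [Algebra K L] [Module L V] [IsScalarTower K L V]
    (W : Submodule K V) : Subalgebra K L where
  carrier := {a | ∀ x ∈ W, a • x ∈ W}
  mul_mem' {a b} ha hb x hx := mul_smul a b x ▸ ha _ (hb x hx)
  add_mem' {a b} ha hb x hx := add_smul a b x ▸ W.add_mem (ha x hx) (hb x hx)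
  algebraMap_mem' r x hx := (algebraMap_smul L r x).symm ▸ W.smul_mem r hx

section ScalarStabilizer

variable {K V : Type*} [Field K] [AddCommGroup V] [Module K V] (L : Type*) [Field L]
  [Algebra K L] [Module L V] [IsScalarTower K L V] (W : Submodule K V)

theorem Submodule.finiteDimensional_scalarStabilizer [FiniteDimensional K W] (hW : W ≠ ⊥) :
    FiniteDimensional K (W.scalarStabilizer L) := by
  obtain ⟨x, hx, hx0⟩ := W.ne_bot_iff.mp hW
  let φ : W.scalarStabilizer L →ₗ[K] W :=
    { toFun a := ⟨(a : L) • x, a.2 x hx⟩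
      map_add' a b := by ext; exact add_smul _ _ _
      map_smul' r a := by ext; exact smul_assoc r (a : L) x }
  refine .of_injective φ fun a b hab ↦ Subtype.ext (smul_left_injective L hx0 ?_)
  exact congrArg Subtype.val hab

variable {L}

theorem Submodule.closure_subset_scalarStabilizer [FiniteDimensional K W] (hW : W ≠ ⊥)
    {s : Set L} (hs : s ⊆ W.scalarStabilizer L) :
    (Subfield.closure s : Set L) ⊆ W.scalarStabilizer L := by
  have := W.finiteDimensional_scalarStabilizer L hW
  have := Algebra.IsIntegral.of_finite K (W.scalarStabilizer L)
  exact Subfield.closure_le (t := ((W.scalarStabilizer L).toIntermediateField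
    fun _ ↦ Algebra.IsIntegral.inv_mem).toSubfield) |>.mpr hs

end ScalarStabilizer

section Schur

variable {K V Γ : Type*} [Field K] [IsAlgClosed K] [AddCommGroup V] [Module K V]
  [FiniteDimensional K V] [Nontrivial V] [Group Γ] (ρ : Representation K Γ V)
  (hρ : ∀ W : Submodule K V, (∀ g, ∀ v ∈ W, ρ g v ∈ W) → W = ⊥ ∨ W = ⊤)
include hρ

theorem Representation.exists_eq_smul_one_of_forall_commute {f : End K V}
    (hf : ∀ g, Commute (ρ g) f) : ∃ c : K, f = c • 1 := by
  obtain ⟨c, hc⟩ := f.exists_eigenvalue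
  refine ⟨c, ?_⟩
  have hinv : ∀ g, ∀ v ∈ f.eigenspace c, ρ g v ∈ f.eigenspace c := by
    intro g v hv
    rw [End.mem_eigenspace_iff] at hv ⊢
    rw [← End.mul_apply, ← (hf g).eq, End.mul_apply, hv, map_smul]
  rcases hρ _ hinv with h | h
  · exact absurd h (End.hasEigenvalue_iff.mp hc)
  · ext v
    simpa using End.mem_eigenspace_iff.mp (h ▸ mem_top : v ∈ f.eigenspace c)

variable [Fintype Γ] [CharZero K]

theorem Representation.sum_conj_eq_smul_one (g : Γ) :
    ∑ u, ρ (u * g * u⁻¹) =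
      ((Fintype.card Γ : K) * LinearMap.trace K V (ρ g) / finrank K V) • 1 := by
  obtain ⟨c, hc⟩ := ρ.exists_eq_smul_one_of_forall_commute hρ (f := ∑ u, ρ (u * g * u⁻¹))
      fun h ↦ by
        simp only [Commute, SemiconjBy, Finset.mul_sum, Finset.sum_mul, ← map_mul]
        exact Fintype.sum_equiv (Equiv.mulLeft h) _ _ fun u ↦ by simp [mul_assoc]
  have htrace := congrArg (LinearMap.trace K V) hc
  have hconj (u : Γ) : LinearMap.trace K V (ρ (u * g * u⁻¹)) = LinearMap.trace K V (ρ g) := by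
    rw [map_mul ρ, map_mul ρ, LinearMap.trace_mul_cycle, ← map_mul ρ, inv_mul_cancel, map_one,
      one_mul]
  simp only [map_sum, hconj, Finset.sum_const, Finset.card_univ, nsmul_eq_mul, map_smul,
    LinearMap.trace_one, smul_eq_mul] at htrace
  have hn : (finrank K V : K) ≠ 0 := Nat.cast_ne_zero.mpr finrank_pos.ne'
  rw [hc, htrace, mul_div_cancel_right₀ _ hn]


theorem Representation.trace_mem_scalarStabilizer [Module ℚ V] (W : Submodule ℚ V)
    (hW : ∀ g, ∀ x ∈ W, ρ g x ∈ W) (g : Γ) :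
    LinearMap.trace K V (ρ g) ∈ W.scalarStabilizer K := by
  have hn : (finrank K V : K) ≠ 0 := Nat.cast_ne_zero.mpr finrank_pos.ne'
  set c := (Fintype.card Γ : K) * LinearMap.trace K V (ρ g) / finrank K V
  have hc : c ∈ W.scalarStabilizer K := fun x hx ↦ by
    have : c • x = ∑ u, ρ (u * g * u⁻¹) x := by
      rw [← LinearMap.sum_apply, ρ.sum_conj_eq_smul_one hρ g]; rfl
    exact this ▸ sum_mem fun u _ ↦ hW _ x hx
  have htrace :
      LinearMap.trace K V (ρ g) = algebraMap ℚ K (finrank K V / Fintype.card Γ) * c := by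
    simp only [c, eq_ratCast]; push_cast; field_simp
  exact htrace ▸ mul_mem (algebraMap_mem _ _) hc

end Schur

theorem Submodule.FG.span_of_tower {R S M : Type*} [Semiring R] [Semiring S] [AddCommMonoid M]
    [Module R M] [Module S M] [SMul R S] [IsScalarTower R S M] {s : Set M}
    (h : (span R s).FG) : (span S s).FG := by
  obtain ⟨t, ht⟩ := h
  rw [← span_span_of_tower R S, ← ht, span_span_of_tower]
  exact fg_span t.finite_toSet

theorem Set.finrank_rat_eq_finrank_int {M : Type*} [AddCommGroup M] [Module ℚ M] (s : Set M)
    [Module.Finite ℤ (span ℤ s)] : Set.finrank ℚ s = Set.finrank ℤ s := by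
  have : IsAddTorsionFree M := .of_module_rat M
  let b := Module.Free.chooseBasis ℤ (span ℤ s)
  have hb : LinearIndependent ℚ ((span ℤ s).subtype ∘ b) :=
    (LinearIndependent.iff_fractionRing ℤ ℚ).mp (b.linearIndependent.map' _ (ker_subtype _))
  have hspan : span ℚ (Set.range ((span ℤ s).subtype ∘ b)) = span ℚ s := by
    rw [Set.range_comp, ← span_span_of_tower ℤ ℚ, span_image, b.span_eq, Submodule.map_top,
      range_subtype, span_span_of_tower]
  rw [Set.finrank, Set.finrank, ← hspan, finrank_span_eq_card hb,
    finrank_eq_card_chooseBasisIndex]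

theorem AddSubgroup.discreteTopology_span_int {E : Type*} [AddCommGroup E] [TopologicalSpace E]
    (Λ : AddSubgroup E) [DiscreteTopology Λ] : DiscreteTopology (span ℤ (Λ : Set E)) :=
  (span_eq Λ.toIntSubmodule).symm ▸ ‹DiscreteTopology Λ›

section DiscreteSubgroup

variable {E : Type*} [NormedAddCommGroup E] [NormedSpace ℝ E] [FiniteDimensional ℝ E]
  [Module ℚ E] (Λ : AddSubgroup E) [DiscreteTopology Λ]

theorem AddSubgroup.finrank_rat_span_eq_finrank_real_span :
    finrank ℚ (span ℚ (Λ : Set E)) = finrank ℝ (span ℝ (Λ : Set E)) :=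
  have := Λ.discreteTopology_span_int
  (Set.finrank_rat_eq_finrank_int _).trans (Real.finrank_eq_int_finrank_of_discrete this).symm

theorem AddSubgroup.finiteDimensional_rat_span : FiniteDimensional ℚ (span ℚ (Λ : Set E)) :=
  have := Λ.discreteTopology_span_int
  Module.Finite.iff_fg.mpr ((Module.Finite.iff_fg (R := ℤ)).mp inferInstance).span_of_tower

end DiscreteSubgroup

section Tower

variable {K L V : Type*} [Field K] [Field L] [Algebra K L] [AddCommGroup V] [Module K V]
  [Module L V] [IsScalarTower K L V] {s : Set V}

theorem Submodule.restrictScalars_span_eq_of_smul_mem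
    (hs : ∀ a : L, ∀ x ∈ span K s, a • x ∈ span K s) :
    (span L s).restrictScalars K = span K s :=
  le_antisymm (span_le (p := { span K s with smul_mem' := hs }) |>.mpr subset_span)
    (span_le_restrictScalars K L s)

theorem Submodule.finiteDimensional_span_of_smul_mem [FiniteDimensional K (span K s)]
    (hs : ∀ a : L, ∀ x ∈ span K s, a • x ∈ span K s) : FiniteDimensional L (span L s) := by
  have : Module.Finite K ((span L s).restrictScalars K) :=
    (restrictScalars_span_eq_of_smul_mem hs).symm ▸ inferInstance
  have : Module.Finite K (span L s) := this
  exact .of_restrictScalars_finite K L _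

theorem Submodule.finrank_mul_finrank_span_of_smul_mem
    (hs : ∀ a : L, ∀ x ∈ span K s, a • x ∈ span K s) :
    finrank K L * finrank L (span L s) = finrank K (span K s) := by
  rw [finrank_mul_finrank, ← restrictScalars_span_eq_of_smul_mem hs]
  rfl

end Tower

theorem Submodule.finrank_span_le_finrank_span {K L V : Type*} [DivisionRing K] [DivisionRing L]
    [AddCommGroup V] [Module K V] [Module L V] (s : Set V) [FiniteDimensional K (span K s)]
    (h : ∀ t : Set V, (span K t : Set V) ⊆ span L t) :
    finrank L (span L s) ≤ finrank K (span K s) := by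
  let b := (span K s).subtype ∘ finBasis K (span K s)
  have hb : span K (Set.range b) = span K s := by
    rw [Set.range_comp, span_image, Basis.span_eq, Submodule.map_top, range_subtype]
  have hsub : s ⊆ span L (Set.range b) := subset_span.trans (hb ▸ h _)
  have := FiniteDimensional.span_of_finite L (Set.finite_range b)
  calc finrank L (span L s) ≤ finrank L (span L (Set.range b)) :=
        finrank_mono (span_le.mpr hsub)
    _ ≤ Fintype.card (Fin _) := finrank_range_le_card b
    _ = finrank K (span K s) := Fintype.card_fin _

theorem Subfield.span_subset_real_span {V : Type*} [AddCommGroup V] [Module ℂ V]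
    {F : Subfield ℂ} (hF : ∀ z ∈ F, z.im = 0) (t : Set V) :
    (span F t : Set V) ⊆ span ℝ t := by
  intro x hx
  induction hx using span_induction with
  | mem y hy => exact subset_span hy
  | zero => exact zero_mem _
  | add a b _ _ ha hb => exact add_mem ha hb
  | smul z y _ hy =>
    have : (z : ℂ) = ((z : ℂ).re : ℂ) := Complex.ext rfl (by simpa using hF z z.2)
    rw [Subfield.smul_def, this, Complex.coe_smul]
    exact smul_mem _ _ hy

theorem Subfield.eq_bot_of_finrank_rat_eq_one {L : Type*} [Field L] [CharZero L] (F : Subfield L)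
    (h : finrank ℚ F = 1) : F = ⊥ := by
  have := congrArg IntermediateField.toSubfield <| (IntermediateField.finrank_eq_one_iff
    (K := F.toIntermediateField fun x ↦ SubfieldClass.ratCast_mem F x)).mp h
  rwa [IntermediateField.bot_toSubfield, ← Subfield.bot_eq_of_charZero] at this

theorem Subfield.eq_bot_or_imaginary_quadratic_of_smul_mem_span {V : Type*}
    [NormedAddCommGroup V] [NormedSpace ℂ V] [FiniteDimensional ℂ V] [Nontrivial V] [Module ℚ V]
    (Λ : AddSubgroup V) [DiscreteTopology Λ] (hΛ : span ℂ (Λ : Set V) = ⊤) (F : Subfield ℂ)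
    (hF : ∀ a : F, ∀ x ∈ span ℚ (Λ : Set V), a • x ∈ span ℚ (Λ : Set V)) :
    F = ⊥ ∨ (finrank ℚ F = 2 ∧ ∃ z ∈ F, z.im ≠ 0) := by
  have := Λ.finiteDimensional_rat_span
  have := finiteDimensional_span_of_smul_mem hF
  have hdm := finrank_mul_finrank_span_of_smul_mem hF
  rw [Λ.finrank_rat_span_eq_finrank_real_span] at hdm
  -- excludes `finrank ℚ F = 0`, the junk value for an infinite extension
  have hnr : finrank ℂ (span ℂ (Λ : Set V)) ≤ finrank ℝ (span ℝ (Λ : Set V)) :=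
    finrank_span_le_finrank_span _ (span_subset_span ℝ ℂ ·)
  have hnm : finrank ℂ (span ℂ (Λ : Set V)) ≤ finrank F (span F (Λ : Set V)) :=
    finrank_span_le_finrank_span _ (span_subset_span F ℂ ·)
  have hr2n : finrank ℝ (span ℝ (Λ : Set V)) ≤ 2 * finrank ℂ (span ℂ (Λ : Set V)) := by
    rw [hΛ, finrank_top, ← finrank_real_of_complex]
    exact Submodule.finrank_le _
  have hn : 0 < finrank ℂ (span ℂ (Λ : Set V)) := by rw [hΛ, finrank_top]; exact finrank_pos
  set d := finrank ℚ F
  set m := finrank F (span F (Λ : Set V))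
  set r := finrank ℝ (span ℝ (Λ : Set V))
  have hd2 : d ≤ 2 := Nat.le_of_mul_le_mul_right (c := m) (by nlinarith) (by omega)
  interval_cases hd : d
  · omega
  · exact .inl (Subfield.eq_bot_of_finrank_rat_eq_one F hd)
  · refine .inr ⟨rfl, ?_⟩
    by_contra! hreal
    have hrm : r ≤ m := finrank_span_le_finrank_span _ (Subfield.span_subset_real_span hreal)
    omega

theorem stmt5_general {V : Type*} [NormedAddCommGroup V] [NormedSpace ℂ V] [FiniteDimensional ℂ V]
    (G : Subgroup (Module.End ℂ V)ˣ) [Finite G]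
    (hirr : ∀ W : Submodule ℂ V,
      (∀ g ∈ G, ∀ v ∈ W, (g : Module.End ℂ V) v ∈ W) → W = ⊥ ∨ W = ⊤)
    (Λ : AddSubgroup V) (hΛne : Λ ≠ ⊥) [DiscreteTopology Λ]
    (hinv : ∀ g ∈ G, ∀ x ∈ Λ, (g : Module.End ℂ V) x ∈ Λ)
    (F : Subfield ℂ)
    (hF : F = Subfield.closure {z : ℂ | ∃ g ∈ G, z = LinearMap.trace ℂ V (g : Module.End ℂ V)}) :
    F = ⊥ ∨ (Module.finrank ℚ F = 2 ∧ ∃ z ∈ F, z.im ≠ 0) := by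
  let : Module ℚ V := Module.compHom V (algebraMap ℚ ℂ)
  have : Fintype G := Fintype.ofFinite G
  let ρ : Representation ℂ G V := (Units.coeHom _).comp G.subtype
  have hρ : ∀ W : Submodule ℂ V, (∀ g, ∀ v ∈ W, ρ g v ∈ W) → W = ⊥ ∨ W = ⊤ :=
    fun W hW ↦ hirr W fun g hg ↦ hW ⟨g, hg⟩
  obtain ⟨x, hxΛ, hx0⟩ := Λ.bot_or_exists_ne_zero.resolve_left hΛne
  have : Nontrivial V := nontrivial_of_ne x 0 hx0
  have hspan : span ℂ (Λ : Set V) = ⊤ :=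
    (hρ _ fun g ↦ mapsTo_span (f := ρ g) (hinv g g.2)).resolve_left
      fun h ↦ hx0 (span_eq_bot.mp h x hxΛ)
  have hW : span ℚ (Λ : Set V) ≠ ⊥ := fun h ↦ hx0 (span_eq_bot.mp h x hxΛ)
  have := Λ.finiteDimensional_rat_span
  have hFW : (F : Set ℂ) ⊆ (span ℚ (Λ : Set V)).scalarStabilizer ℂ := by
    rw [hF]
    refine closure_subset_scalarStabilizer _ hW ?_
    rintro _ ⟨g, hg, rfl⟩
    exact ρ.trace_mem_scalarStabilizer hρ _
      (fun g ↦ mapsTo_span (f := (ρ g).restrictScalars ℚ) (hinv g g.2)) ⟨g, hg⟩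
  exact Subfield.eq_bot_or_imaginary_quadratic_of_smul_mem_span Λ hspan F fun a ↦ hFW a.2

/-- If `G` is an irreducible finite subgroup of `GL(V)` admitting a nonzero invariant
lattice, then the field `ℚ(χ_{G,V})` generated over `ℚ` by the traces of the elements of
`G` is either `ℚ` or an imaginary quadratic number field. -/
theorem stmt5 {V : Type*} [NormedAddCommGroup V] [NormedSpace ℂ V] [FiniteDimensional ℂ V]
    (hdim : 1 ≤ Module.finrank ℂ V)
    (G : Subgroup (Module.End ℂ V)ˣ) [Finite G]
    (hirr : ∀ W : Submodule ℂ V,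
      (∀ g ∈ G, ∀ v ∈ W, (g : Module.End ℂ V) v ∈ W) → W = ⊥ ∨ W = ⊤)
    (Λ : AddSubgroup V) (hΛne : Λ ≠ ⊥) [DiscreteTopology Λ]
    (hinv : ∀ g ∈ G, ∀ x ∈ Λ, (g : Module.End ℂ V) x ∈ Λ)
    (F : Subfield ℂ)
    (hF : F = Subfield.closure {z : ℂ | ∃ g ∈ G, z = LinearMap.trace ℂ V (g : Module.End ℂ V)}) :
    F = ⊥ ∨ (Module.finrank ℚ F = 2 ∧ ∃ z ∈ F, z.im ≠ 0) :=
  stmt5_general G hirr Λ hΛne hinv F hF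
end

section
/- Let G be an irreducible finite subgroup of GL(V) with dim_C V = n, such that the character of G is not rational. If there exists a nonzero G-invariant lattice Λ in V, then the rank of Λ equals 2n. -/
open Module

def cSub {V : Type*} [AddCommGroup V] [Module ℂ V] (W : Submodule ℝ V)
    (h : ∀ x ∈ W, Complex.I • x ∈ W) : Submodule ℂ V where
  carrier := W
  add_mem' ha hb := W.add_mem ha hb
  zero_mem' := W.zero_mem
  smul_mem' c x hx := by
    have hd : c • x = c.re • x + c.im • (Complex.I • x) := by
      conv_lhs => rw [← Complex.re_add_im c]
      rw [add_smul, mul_smul, Complex.coe_smul, Complex.coe_smul]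
    rw [hd]
    exact W.add_mem (W.smul_mem _ hx) (W.smul_mem _ (h x hx))

@[simp] lemma mem_cSub {V : Type*} [AddCommGroup V] [Module ℂ V] {W : Submodule ℝ V}
    {h : ∀ x ∈ W, Complex.I • x ∈ W} {x : V} : x ∈ cSub W h ↔ x ∈ W := Iff.rfl

/-- If `G` is an irreducible finite subgroup of `GL(V)` with `dim_ℂ V = n` whose
character is not rational (the field generated by the traces strictly contains `ℚ`),
then every nonzero `G`-invariant lattice `Λ` in `V` has rank `2n`. -/
theorem stmt7 {V : Type*} [NormedAddCommGroup V] [NormedSpace ℂ V] [FiniteDimensional ℂ V]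
    {n : ℕ} (hn : Module.finrank ℂ V = n) (hn1 : 1 ≤ n)
    (G : Subgroup (Module.End ℂ V)ˣ) [Finite G]
    (hirr : ∀ W : Submodule ℂ V,
      (∀ g ∈ G, ∀ v ∈ W, (g : Module.End ℂ V) v ∈ W) → W = ⊥ ∨ W = ⊤)
    (hnonrat :
      Subfield.closure {z : ℂ | ∃ g ∈ G, z = LinearMap.trace ℂ V (g : Module.End ℂ V)} ≠ ⊥)
    (Λ : AddSubgroup V) (hΛne : Λ ≠ ⊥) [DiscreteTopology Λ]
    (hinv : ∀ g ∈ G, ∀ x ∈ Λ, (g : Module.End ℂ V) x ∈ Λ) :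
    Module.finrank ℤ Λ = 2 * n := by
  classical
  set S : Submodule ℝ V := Submodule.span ℝ (Λ : Set V) with hS
  have hΛS : (Λ : Set V) ⊆ S := Submodule.subset_span
  -- invariance of S
  have hSinv : ∀ g ∈ G, ∀ v ∈ S, (g : Module.End ℂ V) v ∈ S := by
    intro g hg v hv
    induction hv using Submodule.span_induction with
    | mem x hx => exact Submodule.subset_span (hinv g hg x hx)
    | zero => rw [map_zero]; exact S.zero_mem
    | add x y _ _ hx hy => rw [map_add]; exact S.add_mem hx hy
    | smul r x _ hx =>
      rw [LinearMap.map_smul_of_tower]; exact S.smul_mem r hx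
  -- the complex span of Λ is everything
  have hCspan : Submodule.span ℂ (Λ : Set V) = ⊤ := by
    have hinv' : ∀ g ∈ G, ∀ v ∈ Submodule.span ℂ (Λ : Set V),
        (g : Module.End ℂ V) v ∈ Submodule.span ℂ (Λ : Set V) := by
      intro g hg v hv
      induction hv using Submodule.span_induction with
      | mem x hx => exact Submodule.subset_span (hinv g hg x hx)
      | zero => rw [map_zero]; exact Submodule.zero_mem _
      | add x y _ _ hx hy => rw [map_add]; exact Submodule.add_mem _ hx hy
      | smul r x _ hx => rw [map_smul]; exact Submodule.smul_mem _ r hx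
    rcases hirr (Submodule.span ℂ (Λ : Set V)) hinv' with h | h
    · exfalso
      obtain ⟨x, hxΛ, hx0⟩ : ∃ x ∈ Λ, x ≠ 0 := by
        by_contra hc
        push_neg at hc
        exact hΛne (AddSubgroup.eq_bot_iff_forall Λ |>.mpr hc)
      have : x ∈ Submodule.span ℂ (Λ : Set V) := Submodule.subset_span hxΛ
      rw [h, Submodule.mem_bot] at this
      exact hx0 this
    · exact h
  -- iS
  set f : V →ₗ[ℝ] V := (LinearMap.lsmul ℂ V Complex.I).restrictScalars ℝ with hf
  have hfapp : ∀ x : V, f x = Complex.I • x := fun x => rfl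
  set iW : Submodule ℝ V := S.map f with hiW
  have hiWmem : ∀ {x : V}, x ∈ iW ↔ ∃ y ∈ S, Complex.I • y = x := by
    intro x; simp [hiW, Submodule.mem_map, hfapp]
  have hII : ∀ y : V, Complex.I • (Complex.I • y) = -y := by
    intro y
    rw [smul_smul, Complex.I_mul_I, neg_one_smul]
  have hstab : ∀ x ∈ S ⊓ iW, Complex.I • x ∈ S ⊓ iW := by
    rintro x ⟨hxS, hxiW⟩
    obtain ⟨y, hyS, rfl⟩ := hiWmem.mp hxiW
    constructor
    · rw [hII]; exact S.neg_mem hyS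
    · exact hiWmem.mpr ⟨Complex.I • y, hxS, rfl⟩
  set T : Submodule ℂ V := cSub (S ⊓ iW) hstab with hT
  have hTinv : ∀ g ∈ G, ∀ v ∈ T, (g : Module.End ℂ V) v ∈ T := by
    rintro g hg v ⟨hvS, hviW⟩
    obtain ⟨y, hyS, rfl⟩ := hiWmem.mp hviW
    refine ⟨hSinv g hg _ hvS, hiWmem.mpr ⟨(g : Module.End ℂ V) y, hSinv g hg y hyS, ?_⟩⟩
    rw [← map_smul]
  rcases hirr T hTinv with hTbot | hTtop
  · -- S ⊓ iW = ⊥ : the "rational" case, contradiction with hnonrat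
    exfalso
    have hint : S ⊓ iW = ⊥ := by
      rw [eq_bot_iff]
      intro x hx
      have : x ∈ T := hx
      rw [hTbot] at this
      exact this
    have hdecomp : ∀ (z : ℂ) (y : V), z • y = z.re • y + z.im • (Complex.I • y) := by
      intro z y
      conv_lhs => rw [← Complex.re_add_im z]
      rw [add_smul, mul_smul, Complex.coe_smul, Complex.coe_smul]
    have hcomm : ∀ (r : ℝ) (y : V), Complex.I • (r • y) = r • (Complex.I • y) := by
      intro r y
      rw [← Complex.coe_smul r y, ← Complex.coe_smul r (Complex.I • y), smul_smul, smul_smul,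
        mul_comm]
    have hstab2 : ∀ x ∈ S ⊔ iW, Complex.I • x ∈ S ⊔ iW := by
      intro x hx
      obtain ⟨a, ha, bb, hbb, rfl⟩ := Submodule.mem_sup.mp hx
      obtain ⟨y, hyS, rfl⟩ := hiWmem.mp hbb
      rw [smul_add, hII]
      exact Submodule.add_mem _ (Submodule.mem_sup_right (hiWmem.mpr ⟨a, ha, rfl⟩))
        (Submodule.mem_sup_left (S.neg_mem hyS))
    have hsup : S ⊔ iW = ⊤ := by
      have hle : Submodule.span ℂ (Λ : Set V) ≤ cSub (S ⊔ iW) hstab2 :=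
        Submodule.span_le.mpr (fun x hx => Submodule.mem_sup_left (hΛS hx))
      rw [hCspan, top_le_iff] at hle
      rw [eq_top_iff]
      intro x _
      have : x ∈ cSub (S ⊔ iW) hstab2 := by rw [hle]; trivial
      exact this
    set L1 : Submodule ℤ ↥S := (AddSubgroup.toIntSubmodule Λ).comap
      ((S.subtype).restrictScalars ℤ) with hL1
    have himg : (S.subtype) '' (L1 : Set ↥S) = (Λ : Set V) := by
      ext x
      constructor
      · rintro ⟨y, hy, rfl⟩; exact hy
      · intro hx; exact ⟨⟨x, hΛS hx⟩, hx, rfl⟩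
    haveI hdL1 : DiscreteTopology L1 := by
      refine DiscreteTopology.preimage_of_continuous_injective (Λ : Set V) ?_
        (Submodule.injective_subtype _)
      exact LinearMap.continuous_of_finiteDimensional S.subtype
    haveI : IsZLattice ℝ L1 := ⟨by
      rw [← (Submodule.map_injective_of_injective (Submodule.injective_subtype S)).eq_iff,
        Submodule.map_span, Submodule.map_top, Submodule.range_subtype, himg, ← hS]⟩
    haveI : Module.Finite ℤ L1 := ZLattice.module_finite ℝ L1
    haveI : Module.Free ℤ L1 := ZLattice.module_free ℝ L1
    set b : Basis (Module.Free.ChooseBasisIndex ℤ ↥L1) ℤ ↥L1 :=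
      Module.Free.chooseBasis ℤ ↥L1 with hb
    set c : Basis (Module.Free.ChooseBasisIndex ℤ ↥L1) ℝ ↥S := b.ofZLatticeBasis ℝ L1 with hc
    set e : Module.Free.ChooseBasisIndex ℤ ↥L1 → V := fun i => (c i : V) with he
    have heS : ∀ i, e i ∈ S := fun i => (c i).2
    have heΛ : ∀ i, e i ∈ Λ := by
      intro i
      show ((c i : ↥S) : V) ∈ Λ
      rw [hc, b.ofZLatticeBasis_apply ℝ L1 i]
      exact (b i).2
    have liR : LinearIndependent ℝ e :=
      c.linearIndependent.map' S.subtype (Submodule.ker_subtype S)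
    have liC : LinearIndependent ℂ e := by
      rw [Fintype.linearIndependent_iff]
      intro g hg
      have hsplit : (∑ i, (g i).re • e i) + Complex.I • (∑ i, (g i).im • e i) = 0 := by
        rw [Finset.smul_sum, ← Finset.sum_add_distrib, ← hg]
        refine Finset.sum_congr rfl (fun i _ => ?_)
        rw [hdecomp (g i) (e i), hcomm]
      set a := ∑ i, (g i).re • e i with ha
      set bb := ∑ i, (g i).im • e i with hbb
      have haS : a ∈ S := Submodule.sum_mem _ (fun i _ => S.smul_mem _ (heS i))
      have hbS : bb ∈ S := Submodule.sum_mem _ (fun i _ => S.smul_mem _ (heS i))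
      have ha0 : a = 0 := by
        have hmem : a ∈ S ⊓ iW := by
          refine ⟨haS, ?_⟩
          have : a = -(Complex.I • bb) := eq_neg_of_add_eq_zero_left hsplit
          rw [this]
          exact (S.map f).neg_mem (hiWmem.mpr ⟨bb, hbS, rfl⟩)
        rw [hint, Submodule.mem_bot] at hmem
        exact hmem
      have hbb0 : bb = 0 := by
        have h2 : Complex.I • bb = 0 := by
          rw [ha0, zero_add] at hsplit; exact hsplit
        rcases smul_eq_zero.mp h2 with h | h
        · exact absurd h Complex.I_ne_zero
        · exact h
      intro i
      have hre' : ∀ j, (g j).re = 0 :=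
        Fintype.linearIndependent_iff.mp liR (fun i => (g i).re) (by rw [← ha]; exact ha0)
      have him' : ∀ j, (g j).im = 0 :=
        Fintype.linearIndependent_iff.mp liR (fun i => (g i).im) (by rw [← hbb]; exact hbb0)
      exact Complex.ext (hre' i) (him' i)
    have hspan : ⊤ ≤ Submodule.span ℂ (Set.range e) := by
      have hSsub : (S : Set V) ⊆ (Submodule.span ℂ (Set.range e) : Set V) := by
        have h1 : Submodule.span ℝ (Set.range e) = S := by
          have h2 : Set.range e = S.subtype '' (Set.range c) := by
            rw [← Set.range_comp]; rfl
          rw [h2, ← Submodule.map_span, c.span_eq, Submodule.map_top, Submodule.range_subtype]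
        intro s hs
        rw [← h1] at hs
        exact Submodule.span_subset_span ℝ ℂ _ hs
      intro x _
      have hx : x ∈ S ⊔ iW := by rw [hsup]; trivial
      obtain ⟨u, hu, w, hw, rfl⟩ := Submodule.mem_sup.mp hx
      obtain ⟨y, hyS, rfl⟩ := hiWmem.mp hw
      exact Submodule.add_mem _ (hSsub hu) (Submodule.smul_mem _ _ (hSsub hyS))
    set cb : Basis (Module.Free.ChooseBasisIndex ℤ ↥L1) ℂ V := Basis.mk liC hspan with hcb
    have hcbe : ∀ i, cb i = e i := fun i => by rw [hcb, Basis.mk_apply]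
    have key : ∀ (v : ↥S) (i : Module.Free.ChooseBasisIndex ℤ ↥L1),
        cb.repr (v : V) i = ((c.repr v i : ℝ) : ℂ) := by
      intro v i
      have hmaps : (((Finsupp.lapply i : (Module.Free.ChooseBasisIndex ℤ ↥L1 →₀ ℂ) →ₗ[ℂ] ℂ)).restrictScalars ℝ ∘ₗ
            (cb.repr.toLinearMap.restrictScalars ℝ) ∘ₗ S.subtype)
          = Complex.ofRealCLM.toLinearMap ∘ₗ (c.coord i) := by
        refine Basis.ext c (fun j => ?_)
        have h1 : (S.subtype (c j) : V) = cb j := by rw [hcbe]; rfl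
        simp only [LinearMap.coe_comp, Function.comp_apply, LinearMap.coe_restrictScalars,
          LinearEquiv.coe_coe, Submodule.coe_subtype, Finsupp.lapply_apply,
          Basis.coord_apply, ContinuousLinearMap.coe_coe]
        rw [show ((c j : ↥S) : V) = cb j from h1, Basis.repr_self, Basis.repr_self,
          Finsupp.single_apply, Finsupp.single_apply]
        split_ifs <;> simp
      have := LinearMap.congr_fun hmaps v
      simpa using this
    apply hnonrat
    refine le_bot_iff.mp (Subfield.closure_le.mpr ?_)
    rintro z ⟨g, hg, rfl⟩
    rw [SetLike.mem_coe, LinearMap.trace_eq_matrix_trace ℂ cb, Matrix.trace]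
    refine sum_mem (fun i _ => ?_)
    have hgiΛ : (g : Module.End ℂ V) (cb i) ∈ Λ := by
      rw [hcbe]; exact hinv g hg _ (heΛ i)
    have hgiS : (g : Module.End ℂ V) (cb i) ∈ S := hΛS hgiΛ
    set w : ↥S := ⟨(g : Module.End ℂ V) (cb i), hgiS⟩ with hw
    have hwL1 : w ∈ L1 := hgiΛ
    have hdiag : (LinearMap.toMatrix cb cb (g : Module.End ℂ V)) i i
        = (((b.repr ⟨w, hwL1⟩ i : ℤ) : ℝ) : ℂ) := by
      rw [LinearMap.toMatrix_apply]
      have h3 : (cb.repr ((g : Module.End ℂ V) (cb i))) i = ((c.repr w i : ℝ) : ℂ) := key w i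
      rw [h3]
      norm_cast
      exact_mod_cast congrArg (fun r : ℝ => r) (by
        exact_mod_cast (b.ofZLatticeBasis_repr_apply ℝ L1 ⟨w, hwL1⟩ i))
    rw [Matrix.diag_apply, hdiag]
    push_cast
    exact intCast_mem _ _
  · -- S = ⊤ : full lattice
    have hStop : S = ⊤ := by
      rw [eq_top_iff]
      intro x _
      have : x ∈ T := hTtop ▸ Submodule.mem_top
      exact this.1
    set L0 : Submodule ℤ V := AddSubgroup.toIntSubmodule Λ with hL0
    haveI : DiscreteTopology L0 := ‹DiscreteTopology Λ›
    haveI : IsZLattice ℝ L0 := ⟨by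
      rw [AddSubgroup.coe_toIntSubmodule, ← hS, hStop]⟩
    have hr := ZLattice.rank ℝ L0
    have e : (↥Λ) ≃ₗ[ℤ] (↥L0) :=
      { toFun := fun x => ⟨x.1, x.2⟩
        invFun := fun x => ⟨x.1, x.2⟩
        map_add' := fun _ _ => rfl
        map_smul' := fun _ _ => rfl
        left_inv := fun _ => rfl
        right_inv := fun _ => rfl }
    rw [e.finrank_eq, hr, finrank_real_of_complex, hn]
end

section
/- Let G be an irreducible finite subgroup of GL(V) such that the G-module V is not self-dual (equivalently, its character is not real-valued). If there exists a nonzero G-invariant lattice Λ in V, then the field generated over Q by the traces of elements of G is an imaginary quadratic field. -/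
/-!
For `g ∈ G`, the sum of the conjugates `h g h⁻¹` over `h ∈ G` commutes with `G`, so by Schur's
lemma it acts as a scalar `μ`. It preserves `Λ`, so `μ` is a multiplier of `Λ`, and taking traces
gives `|G| χ(g) = μ dim V`. Since `Λ` is discrete and nonzero, its multipliers form a discrete
subring of `ℂ`, hence a free `ℤ`-module of rank at most `2`; the field they generate over `ℚ` thus
has degree at most `2` and contains every character value. A non-real character value forces the
degree to be exactly `2`.
-/

open Module Submodule

def AddSubgroup.multipliers (K : Type*) {V : Type*} [Ring K] [AddCommGroup V] [Module K V]
    (Λ : AddSubgroup V) : Subring K where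
  carrier := {z | ∀ x ∈ Λ, z • x ∈ Λ}
  one_mem' x hx := by simpa using hx
  mul_mem' ha hb x hx := by simpa [mul_smul] using ha _ (hb x hx)
  zero_mem' x _ := by simp
  add_mem' ha hb x hx := by simpa [add_smul] using Λ.add_mem (ha x hx) (hb x hx)
  neg_mem' ha x hx := by simpa [neg_smul] using Λ.neg_mem (ha x hx)

theorem AddSubgroup.discreteTopology_multipliers {K V : Type*} [Field K] [TopologicalSpace K]
    [AddCommGroup V] [Module K V] [TopologicalSpace V] [ContinuousSMul K V]
    (Λ : AddSubgroup V) [DiscreteTopology Λ] (hΛ : Λ ≠ ⊥) : DiscreteTopology (Λ.multipliers K) := by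
  obtain ⟨v, hv, hv0⟩ := Λ.bot_or_exists_ne_zero.resolve_left hΛ
  have : DiscreteTopology ((fun z : K => z • v) ⁻¹' Λ) :=
    DiscreteTopology.preimage_of_continuous_injective (Λ : Set V)
      (continuous_id.smul continuous_const) (smul_left_injective K hv0)
  exact DiscreteTopology.of_subset this fun z hz => hz v hv

namespace Representation

variable {K G V : Type*} [Field K] [Group G] [AddCommGroup V] [Module K V]
  (ρ : Representation K G V)

theorem isIrreducible_of_forall_eq_bot_or_eq_top [Nontrivial V]
    (h : ∀ W : Submodule K V, (∀ g, ∀ v ∈ W, ρ g v ∈ W) → W = ⊥ ∨ W = ⊤) :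
    ρ.IsIrreducible where
  exists_pair_ne := ⟨⊥, ⊤, fun e => bot_ne_top (congrArg Subrepresentation.toSubmodule e)⟩
  eq_bot_or_eq_top W := (h W.toSubmodule fun g _ hv => W.apply_mem_toSubmodule g hv).imp
    (Subrepresentation.toSubmodule_injective ·) (Subrepresentation.toSubmodule_injective ·)

theorem exists_eq_smul_one_of_forall_commute_s8 [IsAlgClosed K] [FiniteDimensional K V]
    [ρ.IsIrreducible] {T : Module.End K V} (hT : ∀ g, Commute (ρ g) T) : ∃ μ : K, T = μ • 1 := by
  obtain ⟨μ, hμ⟩ := IsIrreducible.algebraMap_intertwiningMap_bijective_of_isAlgClosed.2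
    (T.intertwiningMap_of_isIntertwiningMap ρ ρ fun g v => (LinearMap.congr_fun (hT g) v).symm)
  exact ⟨μ, LinearMap.ext fun v => (congrArg (fun f => f.toLinearMap v) hμ).symm⟩

variable [Fintype G]

def sumConj (g : G) : Module.End K V := ∑ h, ρ (h * g * h⁻¹)

theorem commute_sumConj (g w : G) : Commute (ρ w) (ρ.sumConj g) := by
  simp only [Commute, SemiconjBy, sumConj, Finset.mul_sum, Finset.sum_mul, ← map_mul]
  refine Fintype.sum_equiv (Equiv.mulLeft w) _ _ fun h => ?_
  simp only [Equiv.coe_mulLeft]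
  congr 1
  group

theorem trace_sumConj (g : G) :
    LinearMap.trace K V (ρ.sumConj g) = Fintype.card G * LinearMap.trace K V (ρ g) := by
  have hconj (h : G) : LinearMap.trace K V (ρ (h * g * h⁻¹)) = LinearMap.trace K V (ρ g) := by
    rw [map_mul, LinearMap.trace_mul_comm, ← map_mul, inv_mul_cancel_left]
  simp only [sumConj, map_sum, hconj, Finset.sum_const, Finset.card_univ, nsmul_eq_mul]

theorem sumConj_apply_mem {Λ : AddSubgroup V} (hΛ : ∀ g, ∀ x ∈ Λ, ρ g x ∈ Λ) (g : G) {x : V}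
    (hx : x ∈ Λ) : ρ.sumConj g x ∈ Λ := by
  simpa [sumConj] using Λ.sum_mem fun h _ => hΛ (h * g * h⁻¹) x hx

theorem exists_mem_multipliers_card_mul_trace [IsAlgClosed K] [FiniteDimensional K V]
    [ρ.IsIrreducible] {Λ : AddSubgroup V} (hΛ : ∀ g, ∀ x ∈ Λ, ρ g x ∈ Λ) (g : G) :
    ∃ μ ∈ Λ.multipliers K, Fintype.card G * LinearMap.trace K V (ρ g) = μ * finrank K V := by
  obtain ⟨μ, hμ⟩ := ρ.exists_eq_smul_one_of_forall_commute_s8 (ρ.commute_sumConj g)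
  refine ⟨μ, fun x hx => ?_, ?_⟩
  · simpa [hμ] using ρ.sumConj_apply_mem hΛ g hx
  · rw [← ρ.trace_sumConj, hμ, map_smul, LinearMap.trace_one, smul_eq_mul]

end Representation

section RationalSpan

variable {E : Type*} [AddCommGroup E] [Module ℚ E] (L : Submodule ℤ E) [Free ℤ L]

theorem Submodule.span_rat_eq_span_range_chooseBasis :
    span ℚ (L : Set E) = span ℚ (Set.range fun i => (Free.chooseBasis ℤ L i : E)) := by
  have hL : span ℤ (Set.range fun i => (Free.chooseBasis ℤ L i : E)) = L := by
    rw [Set.range_comp' Subtype.val, ← L.coe_subtype, span_image, (Free.chooseBasis ℤ L).span_eq,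
      map_top, range_subtype]
  exact (congrArg (fun M : Submodule ℤ E => span ℚ (M : Set E)) hL).symm.trans
    (span_span_of_tower ℤ ℚ _)

end RationalSpan

section DiscreteSubgroup

variable {E : Type*} [NormedAddCommGroup E] [NormedSpace ℝ E] [FiniteDimensional ℝ E]
  (L : Submodule ℤ E) [DiscreteTopology L]

theorem Submodule.finrank_int_le_of_discrete : finrank ℤ L ≤ finrank ℝ E := by
  have h := Real.finrank_eq_int_finrank_of_discrete (s := (L : Set E)) (by rwa [span_eq])
  rw [Set.finrank, Set.finrank, span_eq] at h
  exact h ▸ Submodule.finrank_le _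

variable [Module ℚ E]

instance Submodule.finiteDimensional_span_rat_of_discrete :
    FiniteDimensional ℚ (span ℚ (L : Set E)) := by
  rw [span_rat_eq_span_range_chooseBasis]
  exact FiniteDimensional.span_of_finite ℚ (Set.finite_range _)

theorem Submodule.finrank_span_rat_le_of_discrete : finrank ℚ (span ℚ (L : Set E)) ≤ finrank ℝ E :=
  calc finrank ℚ (span ℚ (L : Set E))
      ≤ Fintype.card (Free.ChooseBasisIndex ℤ L) := by
        rw [span_rat_eq_span_range_chooseBasis]; exact finrank_range_le_card _
    _ = finrank ℤ L := (finrank_eq_card_chooseBasisIndex ℤ L).symm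
    _ ≤ finrank ℝ E := L.finrank_int_le_of_discrete

end DiscreteSubgroup

section AdjoinSubring

variable {K L : Type*} [Field K] [Field L] [Algebra K L] (S : Subring L)

theorem Subring.toSubmodule_algebraAdjoin :
    Subalgebra.toSubmodule (Algebra.adjoin K (S : Set L)) = span K S := by
  rw [Algebra.adjoin_eq_span]
  exact congrArg (fun M : Submonoid L => span K (M : Set L)) S.toSubmonoid.closure_eq

theorem Subring.toSubmodule_intermediateFieldAdjoin [FiniteDimensional K (span K (S : Set L))] :
    Subalgebra.toSubmodule (IntermediateField.adjoin K (S : Set L)).toSubalgebra = span K S := by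
  set A := Algebra.adjoin K (S : Set L)
  have : FiniteDimensional K A := by
    rwa [← Subalgebra.finiteDimensional_toSubmodule, S.toSubmodule_algebraAdjoin]
  have halg (x : L) (hx : x ∈ (S : Set L)) : IsAlgebraic K x :=
    Subalgebra.isAlgebraic_iff_isAlgebraic_val.1
      (IsAlgebraic.of_finite K (⟨x, Algebra.subset_adjoin hx⟩ : A))
  rw [IntermediateField.adjoin_toSubalgebra_of_isAlgebraic halg, S.toSubmodule_algebraAdjoin]

end AdjoinSubring

section DiscreteSubring

variable (S : Subring ℂ) [DiscreteTopology S]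

instance Subring.finiteDimensional_span_rat_of_discrete :
    FiniteDimensional ℚ (span ℚ (S : Set ℂ)) :=
  have : DiscreteTopology S.toAddSubgroup.toIntSubmodule := ‹_›
  S.toAddSubgroup.toIntSubmodule.finiteDimensional_span_rat_of_discrete

instance Subring.finiteDimensional_adjoin_rat_of_discrete :
    FiniteDimensional ℚ (IntermediateField.adjoin ℚ (S : Set ℂ)) := by
  change FiniteDimensional ℚ
    (Subalgebra.toSubmodule (IntermediateField.adjoin ℚ (S : Set ℂ)).toSubalgebra)
  rw [S.toSubmodule_intermediateFieldAdjoin]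
  infer_instance

theorem Subring.finrank_adjoin_rat_le_two_of_discrete :
    finrank ℚ (IntermediateField.adjoin ℚ (S : Set ℂ)) ≤ 2 := by
  have : DiscreteTopology S.toAddSubgroup.toIntSubmodule := ‹_›
  rw [← IntermediateField.finrank_eq_finrank_subalgebra, ← Subalgebra.finrank_toSubmodule,
    S.toSubmodule_intermediateFieldAdjoin, ← Complex.finrank_real_complex]
  exact S.toAddSubgroup.toIntSubmodule.finrank_span_rat_le_of_discrete

end DiscreteSubring

theorem Subfield.finrank_rat_le_of_le {L : Type*} [Field L] [CharZero L] {F : Subfield L}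
    {E : IntermediateField ℚ L} (h : F ≤ E.toSubfield) [FiniteDimensional ℚ E] :
    FiniteDimensional ℚ F ∧ finrank ℚ F ≤ finrank ℚ E := by
  have : FiniteDimensional ℚ E.toSubfield := ‹FiniteDimensional ℚ E›
  let ι : F →ₗ[ℚ] E.toSubfield := (Subfield.inclusion h).toRatAlgHom.toLinearMap
  have hι : Function.Injective ι := (Subfield.inclusion h).injective
  exact ⟨.of_injective ι hι, LinearMap.finrank_le_finrank_of_injective hι⟩

theorem Subfield.two_le_finrank_rat_of_im_ne_zero {F : Subfield ℂ} [FiniteDimensional ℚ F]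
    {z : ℂ} (hz : z ∈ F) (him : z.im ≠ 0) : 2 ≤ finrank ℚ F := by
  have hli : LinearIndependent ℚ ![(1 : F), ⟨z, hz⟩] := by
    refine LinearIndependent.pair_iff.2 fun s t hst => ?_
    have h : (s : ℂ) + t * z = 0 := by simpa [Rat.smul_def] using congrArg ((↑) : F → ℂ) hst
    have ht : t = 0 := by
      have := congrArg Complex.im h
      simp only [Complex.add_im, Complex.ratCast_im, Complex.mul_im, Complex.ratCast_re, zero_mul,
        add_zero, zero_add, Complex.zero_im, mul_eq_zero, Rat.cast_eq_zero] at this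
      exact this.resolve_right him
    subst ht
    simpa using h
  simpa using hli.fintype_card_le_finrank

theorem stmt8_general {V : Type*} [NormedAddCommGroup V] [NormedSpace ℂ V] [FiniteDimensional ℂ V]
    (G : Subgroup (Module.End ℂ V)ˣ) [Finite G]
    (hirr : ∀ W : Submodule ℂ V,
      (∀ g ∈ G, ∀ v ∈ W, (g : Module.End ℂ V) v ∈ W) → W = ⊥ ∨ W = ⊤)
    -- the character of `G` is not real-valued (`V` is not self-dual):
    (hnotselfdual : ∃ g ∈ G, (LinearMap.trace ℂ V (g : Module.End ℂ V)).im ≠ 0)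
    (Λ : AddSubgroup V) (hΛne : Λ ≠ ⊥) [DiscreteTopology Λ]
    (hinv : ∀ g ∈ G, ∀ x ∈ Λ, (g : Module.End ℂ V) x ∈ Λ)
    (F : Subfield ℂ)
    (hF : F = Subfield.closure {z : ℂ | ∃ g ∈ G, z = LinearMap.trace ℂ V (g : Module.End ℂ V)}) :
    Module.finrank ℚ F = 2 ∧ ∃ z ∈ F, z.im ≠ 0 := by
  have := Fintype.ofFinite G
  obtain ⟨v, -, hv⟩ := Λ.bot_or_exists_ne_zero.resolve_left hΛne
  have : Nontrivial V := ⟨v, 0, hv⟩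
  let ρ : Representation ℂ G V := (Units.coeHom _).comp G.subtype
  have : ρ.IsIrreducible :=
    ρ.isIrreducible_of_forall_eq_bot_or_eq_top fun W hW => hirr W fun g hg => hW ⟨g, hg⟩
  have : DiscreteTopology (Λ.multipliers ℂ) := Λ.discreteTopology_multipliers hΛne
  let E := IntermediateField.adjoin ℚ (Λ.multipliers ℂ : Set ℂ)
  have hFE : F ≤ E.toSubfield := by
    rw [hF, Subfield.closure_le]
    rintro _ ⟨g, hg, rfl⟩
    obtain ⟨μ, hμ, htr⟩ :=
      ρ.exists_mem_multipliers_card_mul_trace (fun g => hinv g g.2) ⟨g, hg⟩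
    rw [← eq_inv_mul_iff_mul_eq₀ (Nat.cast_ne_zero.2 Fintype.card_ne_zero)] at htr
    change LinearMap.trace ℂ V (ρ ⟨g, hg⟩) ∈ E
    rw [htr]
    exact E.mul_mem (E.inv_mem (E.natCast_mem _))
      (E.mul_mem (IntermediateField.subset_adjoin ℚ _ hμ) (E.natCast_mem _))
  obtain ⟨hFfin, hF2⟩ := Subfield.finrank_rat_le_of_le hFE
  obtain ⟨g, hg, him⟩ := hnotselfdual
  have hχ : LinearMap.trace ℂ V (g : Module.End ℂ V) ∈ F :=
    hF ▸ Subfield.subset_closure ⟨g, hg, rfl⟩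
  exact ⟨le_antisymm (hF2.trans (Λ.multipliers ℂ).finrank_adjoin_rat_le_two_of_discrete)
    (Subfield.two_le_finrank_rat_of_im_ne_zero hχ him), _, hχ, him⟩

/-- If `G` is an irreducible finite subgroup of `GL(V)` whose module `V` is not
self-dual (equivalently, whose character is not real-valued), and there exists a nonzero
`G`-invariant lattice in `V`, then the field generated over `ℚ` by the traces of the
elements of `G` is an imaginary quadratic field. -/
theorem stmt8 {V : Type*} [NormedAddCommGroup V] [NormedSpace ℂ V] [FiniteDimensional ℂ V]
    (hdim : 1 ≤ Module.finrank ℂ V)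
    (G : Subgroup (Module.End ℂ V)ˣ) [Finite G]
    (hirr : ∀ W : Submodule ℂ V,
      (∀ g ∈ G, ∀ v ∈ W, (g : Module.End ℂ V) v ∈ W) → W = ⊥ ∨ W = ⊤)
    -- the character of `G` is not real-valued (`V` is not self-dual):
    (hnotselfdual : ∃ g ∈ G, (LinearMap.trace ℂ V (g : Module.End ℂ V)).im ≠ 0)
    (Λ : AddSubgroup V) (hΛne : Λ ≠ ⊥) [DiscreteTopology Λ]
    (hinv : ∀ g ∈ G, ∀ x ∈ Λ, (g : Module.End ℂ V) x ∈ Λ)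
    (F : Subfield ℂ)
    (hF : F = Subfield.closure {z : ℂ | ∃ g ∈ G, z = LinearMap.trace ℂ V (g : Module.End ℂ V)}) :
    Module.finrank ℚ F = 2 ∧ ∃ z ∈ F, z.im ≠ 0 :=
  stmt8_general G hirr hnotselfdual Λ hΛne hinv F hF
end

section
/- Every quaternion algebra H = (a,b / Q) over Q contains a subfield isomorphic to an imaginary quadratic number field. Equivalently, for any nonzero a, b ∈ Q there exist r₁, r₂, r₃ ∈ Q, not all zero, with a r₁² + b r₂² − a b r₃² < 0, giving a maximal subfield Q(√(a r₁² + b r₂² − a b r₃²)) of H which is imaginary quadratic. -/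
open Quaternion

/-!
A pure quaternion `r₁ i + r₂ j + r₃ k` of `(a,b / ℚ)` squares to the rational
`a r₁² + b r₂² − a b r₃²`. One of `a`, `b`, `−ab` is negative, so one of `i`, `j`, `k`
squares to a negative rational and hence generates an imaginary quadratic subfield.
-/

namespace QuaternionAlgebra

theorem mul_self_of_re_eq_zero {R : Type*} [CommRing R] {a b : R} {x : ℍ[R,a,b]}
    (hx : x.re = 0) :
    x * x = ↑(a * x.imI ^ 2 + b * x.imJ ^ 2 - a * b * x.imK ^ 2) := by
  ext <;> simp only [re_mul, imI_mul, imJ_mul, imK_mul, re_coe, imI_coe, imJ_coe, imK_coe, hx] <;>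
    ring

theorem exists_ne_zero_sq_form_neg {R : Type*} [CommRing R] [LinearOrder R]
    [IsStrictOrderedRing R] {a b : R} (ha : a ≠ 0) (hb : b ≠ 0) :
    ∃ r₁ r₂ r₃ : R, ¬(r₁ = 0 ∧ r₂ = 0 ∧ r₃ = 0) ∧
      a * r₁ ^ 2 + b * r₂ ^ 2 - a * b * r₃ ^ 2 < 0 := by
  rcases ha.lt_or_gt with ha | ha
  · exact ⟨1, 0, 0, by simp, by simpa using ha⟩
  rcases hb.lt_or_gt with hb | hb
  · exact ⟨0, 1, 0, by simp, by simpa using hb⟩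
  · exact ⟨0, 0, 1, by simp, by simpa using mul_pos ha hb⟩

end QuaternionAlgebra

open QuaternionAlgebra in
/-- Every quaternion algebra `H = (a,b/ℚ)` contains a subfield isomorphic to an imaginary
quadratic number field: there are `r₁, r₂, r₃ ∈ ℚ`, not all zero, with
`a r₁² + b r₂² − a b r₃² < 0`, and an element of `H` whose square is a negative rational
(generating an imaginary quadratic maximal subfield `ℚ(√(a r₁² + b r₂² − a b r₃²))`). -/
theorem stmt15 (a b : ℚ) (ha : a ≠ 0) (hb : b ≠ 0) :
    (∃ r₁ r₂ r₃ : ℚ, ¬(r₁ = 0 ∧ r₂ = 0 ∧ r₃ = 0) ∧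
        a * r₁ ^ 2 + b * r₂ ^ 2 - a * b * r₃ ^ 2 < 0) ∧
      ∃ (x : ℍ[ℚ, a, b]) (d : ℚ), d < 0 ∧ x * x = algebraMap ℚ ℍ[ℚ, a, b] d := by
  obtain ⟨r₁, r₂, r₃, hr, hneg⟩ := exists_ne_zero_sq_form_neg ha hb
  refine ⟨⟨r₁, r₂, r₃, hr, hneg⟩, ⟨0, r₁, r₂, r₃⟩, _, hneg, ?_⟩
  rw [coe_algebraMap]
  exact mul_self_of_re_eq_zero rfl
end

section
/- Let G be a finite irreducible reflection group in GL(V) generated by reflections r₁,…,r_n with reflecting lines l_j = (id − r_j)(V), and let Λ be a G-invariant lattice in V of rank 2n. Then the sublattice Λ⁰ = Λ∩l₁ + … + Λ∩l_n has finite index in Λ, and each Λ ∩ l_j has rank 2. -/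
/-!
Since `Λ` is discrete of rank `2n = dim_ℝ V`, it spans `V` over `ℝ`. Hence the images
`(1 - r_j) Λ ⊆ Λ ∩ l_j` span the real plane `l_j`, so the discrete group `Λ ∩ l_j` has rank 2.
The sum of the lines `l_j` is stable under every `r_j` (as `r_j v = v - (1 - r_j) v`), hence
under `G`, so by irreducibility it is `V`. Therefore `Λ⁰` spans `V` over `ℝ` as well, and a
subgroup of `Λ` of full rank has finite index.
-/

open Module Submodule

section Reflections

variable {R M : Type*} [Ring R] [AddCommGroup M] [Module R M]

lemma LinearMap.apply_mem_of_range_one_sub_le {W : Submodule R M} {f : End R M}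
    (h : LinearMap.range (1 - f) ≤ W) {v : M} (hv : v ∈ W) : f v ∈ W := by
  have : f v = v - (1 - f) v := by simp
  exact this ▸ sub_mem hv (h (LinearMap.mem_range_self _ v))

lemma range_one_sub_le_of_mem_closure {W : Submodule R M} {S : Set (End R M)ˣ}
    (hS : ∀ s ∈ S, LinearMap.range (1 - (s : End R M)) ≤ W) {g : (End R M)ˣ}
    (hg : g ∈ Subgroup.closure S) : LinearMap.range (1 - (g : End R M)) ≤ W := by
  rintro _ ⟨v, rfl⟩
  induction hg using Subgroup.closure_induction generalizing v with
  | mem s hs => exact hS s hs (LinearMap.mem_range_self _ v)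
  | one => simp
  | mul g h _ _ hg hh =>
    have : (1 - ((g * h : (End R M)ˣ) : End R M)) v =
        (1 - (h : End R M)) v + (1 - (g : End R M)) ((h : End R M) v) := by
      simp
    exact this ▸ add_mem (hh v) (hg _)
  | inv g _ hg =>
    have : (1 - ((g⁻¹ : (End R M)ˣ) : End R M)) v =
        -(1 - (g : End R M)) (((g⁻¹ : (End R M)ˣ) : End R M) v) := by
      simp [← Module.End.mul_apply]
    exact this ▸ neg_mem (hg _)

lemma iSup_range_one_sub_eq_top {ι : Type*} [Nonempty ι] (r : ι → (End R M)ˣ)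
    (hirr : ∀ W : Submodule R M,
      (∀ g ∈ Subgroup.closure (Set.range r), ∀ v ∈ W, (g : End R M) v ∈ W) → W = ⊥ ∨ W = ⊤)
    (hr : ∀ j, LinearMap.range (1 - (r j : End R M)) ≠ ⊥) :
    ⨆ j, LinearMap.range (1 - (r j : End R M)) = ⊤ := by
  set l := fun j ↦ LinearMap.range (1 - (r j : End R M))
  refine (hirr _ fun g hg v hv ↦ LinearMap.apply_mem_of_range_one_sub_le
    (range_one_sub_le_of_mem_closure ?_ hg) hv).resolve_left ?_
  · rintro _ ⟨j, rfl⟩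
    exact le_iSup l j
  · obtain ⟨j⟩ := ‹Nonempty ι›
    exact fun h ↦ hr j (eq_bot_iff.mpr (h ▸ le_iSup l j))

end Reflections

lemma LinearMap.finrank_range_eq_one_of_finrank_ker {K V : Type*} [DivisionRing K] [AddCommGroup V]
    [Module K V] [FiniteDimensional K V] {f : V →ₗ[K] V} (hV : 0 < finrank K V)
    (hf : finrank K (LinearMap.ker f) = finrank K V - 1) : finrank K (LinearMap.range f) = 1 := by
  have := f.finrank_range_add_finrank_ker
  omega

lemma Submodule.span_inf_range_eq_of_span_eq_top {R S M : Type*} [CommSemiring R] [Ring S]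
    [Algebra R S] [AddCommGroup M] [Module S M] [Module R M] [IsScalarTower R S M]
    {Λ : AddSubgroup M} (hΛ : span R (Λ : Set M) = ⊤) (f : M →ₗ[S] M) (hf : ∀ x ∈ Λ, f x ∈ Λ) :
    span R ((Λ ⊓ (LinearMap.range f).toAddSubgroup : AddSubgroup M) : Set M) =
      (LinearMap.range f).restrictScalars R := by
  rw [← LinearMap.range_restrictScalars]
  refine le_antisymm (span_le.mpr fun x hx ↦ (AddSubgroup.mem_inf.mp hx).2) ?_
  rw [LinearMap.range_eq_map, ← hΛ, map_span]
  refine span_mono ?_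
  rintro - ⟨x, hx, rfl⟩
  exact AddSubgroup.mem_inf.mpr ⟨hf x hx, LinearMap.mem_range_self f x⟩

lemma Submodule.finrank_real_restrictScalars {V : Type*} [AddCommGroup V] [Module ℂ V]
    (p : Submodule ℂ V) : finrank ℝ (p.restrictScalars ℝ) = 2 * finrank ℂ p :=
  (finrank_real_of_complex _).trans (congrArg _ (restrictScalarsEquiv ℝ ℂ V p).finrank_eq)

namespace AddSubgroup

lemma relIndex_ne_zero_of_finrank_eq {M : Type*} [AddCommGroup M] {A B : AddSubgroup M}
    (hAB : A ≤ B) [Module.Finite ℤ B] (h : finrank ℤ A = finrank ℤ B) : A.relIndex B ≠ 0 := by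
  set N := (A.addSubgroupOf B).toIntSubmodule
  have hN : finrank ℤ N = finrank ℤ A := (addSubgroupOfEquivOfLe hAB).toIntLinearEquiv.finrank_eq
  have hQ : finrank ℤ (B ⧸ N) = 0 := by
    have := N.finrank_quotient_add_finrank
    omega
  have : Finite (B ⧸ N) := Module.finite_of_fg_torsion _ fun x ↦ by
    obtain ⟨a, ha, hax⟩ := Module.finrank_eq_zero_iff.mp hQ x
    exact ⟨⟨a, mem_nonZeroDivisors_of_ne_zero ha⟩, hax⟩
  -- `B ⧸ N` is definitionally the quotient group `B ⧸ A.addSubgroupOf B`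
  exact @index_ne_zero_of_finite _ _ _ this

variable {E : Type*} [NormedAddCommGroup E] [NormedSpace ℝ E] [FiniteDimensional ℝ E]

lemma finrank_int_eq_finrank_span (L : AddSubgroup E) [DiscreteTopology L] :
    finrank ℤ L = finrank ℝ (span ℝ (L : Set E)) := by
  have h : span ℤ (L : Set E) = L.toIntSubmodule := span_eq L.toIntSubmodule
  have hd : DiscreteTopology (span ℤ (L : Set E)) := h ▸ ‹DiscreteTopology L›
  have := Real.finrank_eq_int_finrank_of_discrete hd
  rw [Set.finrank, Set.finrank, h] at this
  exact this.symm

instance instModuleFinite_of_discrete (L : AddSubgroup E) [DiscreteTopology L] :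
    Module.Finite ℤ L :=
  have : DiscreteTopology L.toIntSubmodule := ‹DiscreteTopology L›
  inferInstanceAs (Module.Finite ℤ L.toIntSubmodule)

end AddSubgroup

theorem stmt18_general {V : Type*} [NormedAddCommGroup V] [NormedSpace ℂ V] [FiniteDimensional ℂ V]
    {n : ℕ} (hn : Module.finrank ℂ V = n) (hn1 : 1 ≤ n)
    (G : Subgroup (Module.End ℂ V)ˣ)
    (hirr : ∀ W : Submodule ℂ V,
      (∀ g ∈ G, ∀ v ∈ W, (g : Module.End ℂ V) v ∈ W) → W = ⊥ ∨ W = ⊤)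
    (r : Fin n → (Module.End ℂ V)ˣ) (hrG : ∀ j, r j ∈ G)
    (hgen : G = Subgroup.closure (Set.range r))
    (hker : ∀ j,
      Module.finrank ℂ (LinearMap.ker ((1 : Module.End ℂ V) - (r j : Module.End ℂ V))) = n - 1)
    (Λ : AddSubgroup V) [DiscreteTopology Λ]
    (hinv : ∀ g ∈ G, ∀ x ∈ Λ, (g : Module.End ℂ V) x ∈ Λ)
    (hrk : Module.finrank ℤ Λ = 2 * n)
    (Λj : Fin n → AddSubgroup V)
    (hΛj : ∀ j, Λj j =
      Λ ⊓ (LinearMap.range ((1 : Module.End ℂ V) - (r j : Module.End ℂ V))).toAddSubgroup) :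
    ((⨆ j, Λj j).addSubgroupOf Λ).index ≠ 0 ∧ ∀ j, Module.finrank ℤ (Λj j) = 2 := by
  set l : Fin n → Submodule ℂ V := fun j ↦ LinearMap.range (1 - (r j : End ℂ V))
  have hV : finrank ℝ V = 2 * n := hn ▸ finrank_real_of_complex V
  have hl : ∀ j, finrank ℂ (l j) = 1 := fun j ↦
    LinearMap.finrank_range_eq_one_of_finrank_ker (hn ▸ j.pos) (hn ▸ hker j)
  have hΛspan : span ℝ (Λ : Set V) = ⊤ :=
    eq_top_of_finrank_eq (by rw [← AddSubgroup.finrank_int_eq_finrank_span, hrk, hV])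
  have hspan : ∀ j, span ℝ (Λj j : Set V) = (l j).restrictScalars ℝ := fun j ↦
    hΛj j ▸ span_inf_range_eq_of_span_eq_top hΛspan _ fun x hx ↦ sub_mem hx (hinv _ (hrG j) x hx)
  have hΛjΛ : ∀ j, Λj j ≤ Λ := fun j ↦ hΛj j ▸ inf_le_left
  have hrank : ∀ j, finrank ℤ (Λj j) = 2 := fun j ↦ by
    have : DiscreteTopology (Λj j) := .of_subset ‹_› (hΛjΛ j)
    rw [AddSubgroup.finrank_int_eq_finrank_span, hspan j, finrank_real_restrictScalars, hl j]
  have hsup : span ℝ ((⨆ j, Λj j : AddSubgroup V) : Set V) = ⊤ := by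
    have : Nonempty (Fin n) := ⟨⟨0, hn1⟩⟩
    have hl_top : ⨆ j, l j = ⊤ := iSup_range_one_sub_eq_top r (hgen ▸ hirr) fun j ↦
      Submodule.one_le_finrank_iff.mp (hl j).ge
    rw [eq_top_iff, ← restrictScalars_top ℝ ℂ V, ← hl_top, restrictScalars_iSup, iSup_le_iff]
    exact fun j ↦ hspan j ▸ span_mono (le_iSup Λj j)
  have : DiscreteTopology (⨆ j, Λj j : AddSubgroup V) := .of_subset ‹_› (iSup_le hΛjΛ)
  refine ⟨AddSubgroup.relIndex_ne_zero_of_finrank_eq (iSup_le hΛjΛ) ?_, hrank⟩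
  rw [AddSubgroup.finrank_int_eq_finrank_span, hsup, finrank_top, hV, hrk]

/-- Let `G ⊆ GL(V)` be a finite irreducible reflection group generated by reflections
`r₁, …, r_n` with reflecting lines `l_j = (id − r_j)(V)`, and let `Λ` be a `G`-invariant
lattice in `V` of rank `2n`. Then the sublattice `Λ⁰ = Λ∩l₁ + … + Λ∩l_n` has finite
index in `Λ`, and each `Λ ∩ l_j` has rank `2`. -/
theorem stmt18 {V : Type*} [NormedAddCommGroup V] [NormedSpace ℂ V] [FiniteDimensional ℂ V]
    {n : ℕ} (hn : Module.finrank ℂ V = n) (hn1 : 1 ≤ n)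
    (G : Subgroup (Module.End ℂ V)ˣ) [Finite G]
    (hirr : ∀ W : Submodule ℂ V,
      (∀ g ∈ G, ∀ v ∈ W, (g : Module.End ℂ V) v ∈ W) → W = ⊥ ∨ W = ⊤)
    (r : Fin n → (Module.End ℂ V)ˣ) (hrG : ∀ j, r j ∈ G)
    (hgen : G = Subgroup.closure (Set.range r))
    -- each `r j` is a reflection:
    (hord : ∀ j, IsOfFinOrder (r j))
    (hker : ∀ j,
      Module.finrank ℂ (LinearMap.ker ((1 : Module.End ℂ V) - (r j : Module.End ℂ V))) = n - 1)
    (Λ : AddSubgroup V) [DiscreteTopology Λ]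
    (hinv : ∀ g ∈ G, ∀ x ∈ Λ, (g : Module.End ℂ V) x ∈ Λ)
    (hrk : Module.finrank ℤ Λ = 2 * n)
    (Λj : Fin n → AddSubgroup V)
    (hΛj : ∀ j, Λj j =
      Λ ⊓ (LinearMap.range ((1 : Module.End ℂ V) - (r j : Module.End ℂ V))).toAddSubgroup) :
    ((⨆ j, Λj j).addSubgroupOf Λ).index ≠ 0 ∧ ∀ j, Module.finrank ℤ (Λj j) = 2 :=
  stmt18_general hn hn1 G hirr r hrG hgen hker Λ hinv hrk Λj hΛj
end
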